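/- Let 0 < α < 1. The function E_α satisfies: (1) E_α(t) > 0 for every t > 0; (2) E_α is integrable on (0,∞); and (3) ∫₀^∞ E_α(t) dt = 1. -/

import Mathlib

/-!
Integrating the Laplace transform `t ↦ ∫ e^{-rt} g(r) dr` over `t > 0` replaces `e^{-rt}` by
`1/r` (Fubini), so `∫ E_α = (sin απ / π) ∫₀^∞ r^{α-1} / D(r) dr` with `D` the denominator of
`E_α`. Writing `D(r) = (r^α + cos απ)² + sin² απ` and substituting `u = r^α`, the last integral is
`α⁻¹ ∫₀^∞ du / ((u + cos απ)² + sin² απ) = α⁻¹ · απ / sin απ`, an arctan integral.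
Positivity, and integrability in `r` for fixed `t`, come from `r^α / D(r) ≤ 1 / (2 (1 + cos απ))`,
which is `(r^α - 1)² ≥ 0`.
-/

open MeasureTheory Real Set

/-- The kernel `E_α(t) = (sin(απ)/π) ∫₀^∞ e^(-rt) r^α/(r^(2α)+2r^α cos(απ)+1) dr`. -/
noncomputable def Ealpha (α t : ℝ) : ℝ :=
  (Real.sin (α * Real.pi) / Real.pi) *
    ∫ r in Set.Ioi (0 : ℝ),
      Real.exp (-r * t) * r ^ α /
        (r ^ (2 * α) + 2 * r ^ α * Real.cos (α * Real.pi) + 1)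

open Filter Topology

section ArctanIntegral

variable (c : ℝ) {s : ℝ}

lemma hasDerivAt_inv_mul_arctan_add_div (hs : s ≠ 0) (u : ℝ) :
    HasDerivAt (fun u => s⁻¹ * arctan ((u + c) / s)) ((u + c) ^ 2 + s ^ 2)⁻¹ u := by
  refine ((((hasDerivAt_id' u).add_const c).div_const s).arctan.const_mul s⁻¹).congr_deriv ?_
  field_simp
  ring

lemma tendsto_inv_mul_arctan_add_div_atTop (hs : 0 < s) :
    Tendsto (fun u => s⁻¹ * arctan ((u + c) / s)) atTop (𝓝 (s⁻¹ * (π / 2))) :=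
  ((tendsto_arctan_atTop.mono_right nhdsWithin_le_nhds).comp
    ((tendsto_atTop_add_const_right atTop c tendsto_id).atTop_div_const hs)).const_mul _

lemma integrableOn_Ioi_inv_add_sq_add_sq (hs : 0 < s) :
    IntegrableOn (fun u => ((u + c) ^ 2 + s ^ 2)⁻¹) (Ioi 0) :=
  integrableOn_Ioi_deriv_of_nonneg' (fun u _ => hasDerivAt_inv_mul_arctan_add_div c hs.ne' u)
    (fun u _ => by positivity) (tendsto_inv_mul_arctan_add_div_atTop c hs)

lemma integral_Ioi_inv_add_sq_add_sq (hs : 0 < s) :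
    ∫ u in Ioi 0, ((u + c) ^ 2 + s ^ 2)⁻¹ = (π / 2 - arctan (c / s)) / s := by
  rw [integral_Ioi_of_hasDerivAt_of_nonneg'
    (fun u _ => hasDerivAt_inv_mul_arctan_add_div c hs.ne' u)
    (fun u _ => by positivity) (tendsto_inv_mul_arctan_add_div_atTop c hs)]
  simp only [zero_add]
  ring

lemma integral_Ioi_inv_add_cos_sq_add_sin_sq {θ : ℝ} (hθ0 : 0 < θ) (hθπ : θ < π) :
    ∫ u in Ioi 0, ((u + cos θ) ^ 2 + sin θ ^ 2)⁻¹ = θ / sin θ := by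
  have hcot : arctan (cos θ / sin θ) = π / 2 - θ := by
    rw [← inv_div, ← tan_eq_sin_div_cos, ← tan_pi_div_two_sub,
      arctan_tan (by linarith) (by linarith)]
  rw [integral_Ioi_inv_add_sq_add_sq _ (sin_pos_of_pos_of_lt_pi hθ0 hθπ), hcot]
  ring

end ArctanIntegral

section Laplace

lemma integral_Ioi_exp_neg_mul {r : ℝ} (hr : 0 < r) : ∫ t in Ioi 0, exp (-r * t) = r⁻¹ := by
  rw [integral_exp_mul_Ioi (neg_lt_zero.2 hr), mul_zero, exp_zero, div_neg, neg_div, neg_neg,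
    one_div]

lemma setIntegral_pos_of_pos {X : Type*} [MeasurableSpace X] {μ : Measure X} {f : X → ℝ}
    {s : Set X} (hs : MeasurableSet s) (hμs : μ s ≠ 0) (hf : IntegrableOn f s μ)
    (hpos : ∀ x ∈ s, 0 < f x) : 0 < ∫ x in s, f x ∂μ := by
  rw [setIntegral_pos_iff_support_of_nonneg_ae
    (ae_restrict_of_forall_mem hs fun x hx => (hpos x hx).le) hf,
    inter_eq_right.2 fun x hx => Function.mem_support.2 (hpos x hx).ne']
  exact pos_iff_ne_zero.2 hμs

variable {g : ℝ → ℝ}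

lemma integrableOn_exp_neg_mul_mul_of_bounded
    (hg : AEStronglyMeasurable g (volume.restrict (Ioi 0))) {C : ℝ}
    (hC : ∀ r ∈ Ioi (0 : ℝ), |g r| ≤ C) {t : ℝ} (ht : 0 < t) :
    IntegrableOn (fun r => exp (-r * t) * g r) (Ioi 0) := by
  refine Integrable.mono' ((exp_neg_integrableOn_Ioi 0 ht).mul_const C)
    ((by fun_prop : Continuous fun r => exp (-r * t)).aestronglyMeasurable.mul hg) ?_
  filter_upwards [ae_restrict_mem measurableSet_Ioi] with r hr
  rw [norm_mul, norm_of_nonneg (exp_pos _).le, Real.norm_eq_abs, neg_mul, neg_mul, mul_comm t r]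
  exact mul_le_mul_of_nonneg_left (hC r hr) (exp_pos _).le

lemma integrable_prod_exp_neg_mul_mul (hg : IntegrableOn (fun r => g r / r) (Ioi 0)) :
    Integrable (fun p : ℝ × ℝ => exp (-p.1 * p.2) * g p.1)
      ((volume.restrict (Ioi 0)).prod (volume.restrict (Ioi 0))) := by
  have hg_meas : AEStronglyMeasurable g (volume.restrict (Ioi 0)) := by
    refine (aestronglyMeasurable_id.mul hg.aestronglyMeasurable).congr ?_
    filter_upwards [ae_restrict_mem measurableSet_Ioi] with r hr
    exact mul_div_cancel₀ _ (ne_of_gt hr)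
  refine (integrable_prod_iff ?_).2 ⟨?_, ?_⟩
  · exact (by fun_prop : Continuous fun p : ℝ × ℝ => exp (-p.1 * p.2)).aestronglyMeasurable.mul
      hg_meas.comp_fst
  · filter_upwards [ae_restrict_mem measurableSet_Ioi] with r hr
    exact (exp_neg_integrableOn_Ioi 0 hr).mul_const _
  · refine hg.norm.congr ?_
    filter_upwards [ae_restrict_mem measurableSet_Ioi] with r hr
    simp only [norm_mul, norm_of_nonneg (exp_pos _).le]
    rw [integral_mul_const, integral_Ioi_exp_neg_mul hr, norm_div, norm_of_nonneg hr.le,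
      div_eq_inv_mul]

lemma integrableOn_integral_exp_neg_mul_mul (hg : IntegrableOn (fun r => g r / r) (Ioi 0)) :
    IntegrableOn (fun t => ∫ r in Ioi 0, exp (-r * t) * g r) (Ioi 0) :=
  (integrable_prod_exp_neg_mul_mul hg).integral_prod_right

lemma integral_Ioi_integral_exp_neg_mul_mul (hg : IntegrableOn (fun r => g r / r) (Ioi 0)) :
    ∫ t in Ioi 0, ∫ r in Ioi 0, exp (-r * t) * g r = ∫ r in Ioi 0, g r / r := by
  rw [← integral_integral_swap (integrable_prod_exp_neg_mul_mul hg)]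
  refine setIntegral_congr_fun measurableSet_Ioi fun r hr => ?_
  rw [integral_mul_const, integral_Ioi_exp_neg_mul hr, inv_mul_eq_div]

end Laplace

namespace Ealpha

noncomputable def denom (α r : ℝ) : ℝ := r ^ (2 * α) + 2 * r ^ α * cos (α * π) + 1

variable {α r : ℝ}

lemma denom_eq_sq_add_sq (hr : 0 < r) :
    denom α r = (r ^ α + cos (α * π)) ^ 2 + sin (α * π) ^ 2 := by
  rw [denom, mul_comm 2 α, rpow_mul hr.le, rpow_two]
  linear_combination -sin_sq_add_cos_sq (α * π)

lemma two_mul_one_add_cos_mul_rpow_le_denom (hr : 0 < r) :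
    2 * (1 + cos (α * π)) * r ^ α ≤ denom α r := by
  rw [denom, mul_comm 2 α, rpow_mul hr.le, rpow_two]
  linarith [sq_nonneg (r ^ α - 1)]

lemma denom_pos (hc : -1 < cos (α * π)) (hr : 0 < r) : 0 < denom α r :=
  lt_of_lt_of_le (mul_pos (by linarith) (rpow_pos_of_pos hr α))
    (two_mul_one_add_cos_mul_rpow_le_denom hr)

lemma rpow_div_denom_le (hc : -1 < cos (α * π)) (hr : 0 < r) :
    r ^ α / denom α r ≤ (2 * (1 + cos (α * π)))⁻¹ := by
  rw [div_le_iff₀ (denom_pos hc hr), ← div_eq_inv_mul, le_div_iff₀ (by linarith)]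
  linarith [two_mul_one_add_cos_mul_rpow_le_denom (α := α) hr]

lemma rpow_div_denom_div_eq_rpow_sub_one_smul (hr : 0 < r) :
    r ^ α / denom α r / r = r ^ (α - 1) • ((r ^ α + cos (α * π)) ^ 2 + sin (α * π) ^ 2)⁻¹ := by
  rw [denom_eq_sq_add_sq hr, rpow_sub_one hr.ne', smul_eq_mul]
  ring

lemma integrableOn_rpow_div_denom_div_self (hα0 : 0 < α) (hα1 : α < 1) :
    IntegrableOn (fun r => r ^ α / denom α r / r) (Ioi 0) := by
  refine (integrableOn_congr_fun (fun r hr => rpow_div_denom_div_eq_rpow_sub_one_smul hr)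
    measurableSet_Ioi).2 ?_
  exact (integrableOn_Ioi_comp_rpow_iff' _ hα0.ne').2 (integrableOn_Ioi_inv_add_sq_add_sq _
    (sin_pos_of_pos_of_lt_pi (by positivity) (by nlinarith [pi_pos])))

lemma integral_rpow_div_denom_div_self (hα0 : 0 < α) (hα1 : α < 1) :
    ∫ r in Ioi 0, r ^ α / denom α r / r = π / sin (α * π) := by
  set G : ℝ → ℝ := fun u => ((u + cos (α * π)) ^ 2 + sin (α * π) ^ 2)⁻¹
  calc ∫ r in Ioi 0, r ^ α / denom α r / r
      = α⁻¹ * ∫ r in Ioi 0, (α * r ^ (α - 1)) • G (r ^ α) := by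
        rw [← integral_const_mul]
        refine setIntegral_congr_fun measurableSet_Ioi fun r hr => ?_
        rw [rpow_div_denom_div_eq_rpow_sub_one_smul hr, smul_eq_mul, smul_eq_mul,
          ← mul_assoc, ← mul_assoc, inv_mul_cancel₀ hα0.ne', one_mul]
    _ = α⁻¹ * (α * π / sin (α * π)) := by
        rw [integral_comp_rpow_Ioi_of_pos hα0,
          integral_Ioi_inv_add_cos_sq_add_sin_sq (by positivity) (by nlinarith [pi_pos])]
    _ = π / sin (α * π) := by field_simp

end Ealpha

/-- For `0 < α < 1`: `E_α(t) > 0` for `t > 0`, `E_α` is integrable on `(0,∞)`,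
and `∫₀^∞ E_α(t) dt = 1`. -/
theorem Ealpha_properties (α : ℝ) (hα0 : 0 < α) (hα1 : α < 1) :
    (∀ t > (0 : ℝ), 0 < Ealpha α t) ∧
      IntegrableOn (Ealpha α) (Set.Ioi 0) ∧
      ∫ t in Set.Ioi (0 : ℝ), Ealpha α t = 1 := by
  have hs : 0 < sin (α * π) := sin_pos_of_pos_of_lt_pi (by positivity) (by nlinarith [pi_pos])
  have hc : -1 < cos (α * π) := by
    nlinarith [sin_sq_add_cos_sq (α * π), neg_one_le_cos (α * π)]
  set g : ℝ → ℝ := fun r => r ^ α / Ealpha.denom α r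
  have hE : Ealpha α = fun t => sin (α * π) / π * ∫ r in Ioi 0, exp (-r * t) * g r := by
    funext t
    simp only [Ealpha, g, Ealpha.denom, mul_div_assoc]
  have hg : IntegrableOn (fun r => g r / r) (Ioi 0) :=
    Ealpha.integrableOn_rpow_div_denom_div_self hα0 hα1
  have hg_pos : ∀ r ∈ Ioi (0 : ℝ), 0 < g r := fun r hr =>
    div_pos (rpow_pos_of_pos hr α) (Ealpha.denom_pos hc hr)
  refine ⟨fun t ht => ?_, ?_, ?_⟩
  · have hg_meas : Measurable g := by unfold g Ealpha.denom; fun_prop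
    have hg_bdd : ∀ r ∈ Ioi (0 : ℝ), |g r| ≤ (2 * (1 + cos (α * π)))⁻¹ := fun r hr => by
      rw [abs_of_pos (hg_pos r hr)]
      exact Ealpha.rpow_div_denom_le hc hr
    rw [hE]
    exact mul_pos (div_pos hs pi_pos) (setIntegral_pos_of_pos measurableSet_Ioi (by simp)
      (integrableOn_exp_neg_mul_mul_of_bounded hg_meas.aestronglyMeasurable hg_bdd ht)
      fun r hr => mul_pos (exp_pos _) (hg_pos r hr))
  · rw [hE]
    exact (integrableOn_integral_exp_neg_mul_mul hg).const_mul _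
  · rw [hE, integral_const_mul, integral_Ioi_integral_exp_neg_mul_mul hg,
      Ealpha.integral_rpow_div_denom_div_self hα0 hα1]
    field_simp
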